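/- Under the correlated Erdős–Rényi planted alignment model with parameters (n,q,s) and s > q, for any symmetric 0/1 matrices a, b (zero diagonal) realized with positive probability, a permutation π maximizes the posterior probability P(π* = π | A = a, B = b) over all permutations of [n] if and only if π maximizes ⟨a, ΠbΠᵀ⟩ = Σ_{u,v} a_{u,v} b_{π(u),π(v)}, i.e. the maximum-a-posteriori estimator of π* is exactly the solution of the quadratic assignment problem argmax_Π ⟨A, ΠBΠᵀ⟩. (This uses that r := s(1−q(2−s)) / (q(1−s)²) > 1 whenever s > q.) -/

import Mathlib

/-- Probability of a single pair of correlated Bernoulli edge indicators in the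
correlated Erdős–Rényi model `G(n,q,s)`. -/
def pairProb (q s : ℝ) : Bool → Bool → ℝ
  | true, true => q * s
  | true, false => q * (1 - s)
  | false, true => q * (1 - s)
  | false, false => 1 - q * (2 - s)

/-- Joint probability `P(π* = π, A = a, B = b)` under the correlated Erdős–Rényi
planted alignment model: the pairs `(A_{uv}, A'_{uv})`, `u < v`, are i.i.d. with
distribution `pairProb q s`, `π*` is a uniform permutation independent of
everything, and `B_{π*(u),π*(v)} = A'_{u,v}`. -/
noncomputable def corrERJoint (n : ℕ) (q s : ℝ) (π : Equiv.Perm (Fin n))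
    (a b : Fin n → Fin n → Bool) : ℝ :=
  (Nat.factorial n : ℝ)⁻¹ *
    ∏ e ∈ Finset.univ.filter (fun e : Fin n × Fin n => e.1 < e.2),
      pairProb q s (a e.1 e.2) (b (π e.1) (π e.2))

/-- Posterior probability `P(π* = π | A = a, B = b)`. -/
noncomputable def corrERPosterior (n : ℕ) (q s : ℝ) (π : Equiv.Perm (Fin n))
    (a b : Fin n → Fin n → Bool) : ℝ :=
  corrERJoint n q s π a b / ∑ π' : Equiv.Perm (Fin n), corrERJoint n q s π' a b

/-- The QAP objective `⟨a, Π b Πᵀ⟩ = Σ_{u,v} a_{u,v} b_{π(u),π(v)}`. -/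
def qapScore (n : ℕ) (π : Equiv.Perm (Fin n)) (a b : Fin n → Fin n → Bool) : ℝ :=
  ∑ u : Fin n, ∑ v : Fin n,
    (if a u v = true then (1 : ℝ) else 0) * (if b (π u) (π v) = true then (1 : ℝ) else 0)

/-!
With `ρ = q(1-s)/(1-q(2-s))` and `r = qs(1-q(2-s))/(q(1-s))²`, every pair probability factors
as `pairProb q s x y = (1-q(2-s)) ρ^x ρ^y r^(x∧y)`. In the likelihood of `π` the factors `ρ^a`
and `ρ^(b∘π)` do not depend on `π` (`b∘π` has as many edges as `b`), so the likelihood is a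
constant times `r^k(π)`, where `k(π)` counts the edges shared by `a` and the relabelled `b`;
and `⟨a, Π b Πᵀ⟩ = 2 k(π)`. Since `r - 1 = q(s-q)/(q(1-s))² > 0`, maximizing either objective
means maximizing `k`.
-/

open Finset

section PairSums

variable {ι M : Type*} [Fintype ι] [LinearOrder ι]

@[to_additive]
theorem Finset.prod_filter_lt_perm [CommMonoid M] (σ : Equiv.Perm ι) (g : ι → ι → M)
    (hg : ∀ u v, g u v = g v u) :
    ∏ e ∈ univ.filter (fun e : ι × ι => e.1 < e.2), g (σ e.1) (σ e.2)
      = ∏ e ∈ univ.filter (fun e : ι × ι => e.1 < e.2), g e.1 e.2 := by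
  refine prod_nbij' (fun e => (min (σ e.1) (σ e.2), max (σ e.1) (σ e.2)))
    (fun e => (min (σ.symm e.1) (σ.symm e.2), max (σ.symm e.1) (σ.symm e.2))) ?_ ?_ ?_ ?_ ?_
  all_goals
    rintro ⟨u, v⟩ h
    simp only [mem_filter, mem_univ, true_and] at h
  · simpa using (σ.injective.ne h.ne).symm
  · simpa using (σ.symm.injective.ne h.ne).symm
  · rcases le_total (σ u) (σ v) with huv | huv <;> simp [huv, h.le]
  · rcases le_total (σ.symm u) (σ.symm v) with huv | huv <;> simp [huv, h.le]
  · rcases le_total (σ u) (σ v) with huv | huv <;> simp [huv, hg (σ u)]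

theorem Finset.sum_prod_eq_two_nsmul_sum_lt [AddCommMonoid M] (c : ι → ι → M)
    (hc : ∀ u v, c u v = c v u) (hdiag : ∀ u, c u u = 0) :
    ∑ e : ι × ι, c e.1 e.2 = 2 • ∑ e ∈ univ.filter (fun e : ι × ι => e.1 < e.2), c e.1 e.2 := by
  rw [← sum_filter_add_sum_filter_not univ (fun e : ι × ι => e.1 < e.2),
    ← sum_filter_add_sum_filter_not (univ.filter fun e : ι × ι => ¬ e.1 < e.2)
      (fun e : ι × ι => e.2 < e.1), two_nsmul]
  have hgt : ∑ e ∈ (univ.filter fun e : ι × ι => ¬ e.1 < e.2).filter (fun e => e.2 < e.1),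
      c e.1 e.2 = ∑ e ∈ univ.filter (fun e : ι × ι => e.1 < e.2), c e.1 e.2 := by
    refine sum_nbij' Prod.swap Prod.swap ?_ ?_ (by simp) (by simp) (fun e _ => hc _ _)
    all_goals
      rintro ⟨u, v⟩ h
      simp only [mem_filter, mem_univ, true_and] at h ⊢
    · exact h.2
    · exact ⟨h.not_gt, h⟩
  have hdiag' : ∑ e ∈ (univ.filter fun e : ι × ι => ¬ e.1 < e.2).filter (fun e => ¬ e.2 < e.1),
      c e.1 e.2 = 0 := by
    refine sum_eq_zero ?_
    rintro ⟨u, v⟩ h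
    simp only [mem_filter, mem_univ, true_and, not_lt] at h
    rw [le_antisymm h.2 h.1, hdiag]
  rw [hgt, hdiag', add_zero]

end PairSums

section CorrelatedER

variable {n : ℕ} {q s : ℝ} {a b : Fin n → Fin n → Bool}

noncomputable def corrERRatio (q s : ℝ) : ℝ := q * s * (1 - q * (2 - s)) / (q * (1 - s)) ^ 2

def agreeCount (n : ℕ) (π : Equiv.Perm (Fin n)) (a b : Fin n → Fin n → Bool) : ℕ :=
  ∑ e ∈ univ.filter (fun e : Fin n × Fin n => e.1 < e.2), (a e.1 e.2 && b (π e.1) (π e.2)).toNat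

theorem one_lt_corrERRatio (hq : 0 < q) (hqs : q < s) (hP : 0 < q * (1 - s)) :
    1 < corrERRatio q s := by
  rw [corrERRatio, one_lt_div (by positivity)]
  nlinarith [mul_pos hq (sub_pos.2 hqs)]

theorem pairProb_eq_mul_pow (hP : q * (1 - s) ≠ 0) (hQ : 1 - q * (2 - s) ≠ 0) (x y : Bool) :
    pairProb q s x y = (1 - q * (2 - s)) * (q * (1 - s) / (1 - q * (2 - s))) ^ x.toNat
      * (q * (1 - s) / (1 - q * (2 - s))) ^ y.toNat * corrERRatio q s ^ (x && y).toNat := by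
  have hq : q ≠ 0 := left_ne_zero_of_mul hP
  have hs : 1 - s ≠ 0 := right_ne_zero_of_mul hP
  cases x <;> cases y <;> simp [pairProb, corrERRatio] <;> field_simp

theorem corrERJoint_eq_mul_pow (hP : q * (1 - s) ≠ 0) (hQ : 1 - q * (2 - s) ≠ 0)
    (hb : ∀ u v, b u v = b v u) (π : Equiv.Perm (Fin n)) :
    corrERJoint n q s π a b = (n.factorial : ℝ)⁻¹ *
      (∏ e ∈ univ.filter (fun e : Fin n × Fin n => e.1 < e.2),
        (1 - q * (2 - s)) * (q * (1 - s) / (1 - q * (2 - s))) ^ (a e.1 e.2).toNat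
          * (q * (1 - s) / (1 - q * (2 - s))) ^ (b e.1 e.2).toNat)
      * corrERRatio q s ^ agreeCount n π a b := by
  simp only [corrERJoint, pairProb_eq_mul_pow hP hQ, prod_mul_distrib, agreeCount,
    prod_pow_eq_pow_sum]
  rw [sum_filter_lt_perm π (fun u v => (b u v).toNat) (fun u v => by rw [hb])]
  ring

theorem corrERJoint_le_iff (hq : 0 < q) (hqs : q < s) (hP : 0 < q * (1 - s))
    (hQ : 0 < 1 - q * (2 - s)) (hb : ∀ u v, b u v = b v u) (π π' : Equiv.Perm (Fin n)) :
    corrERJoint n q s π a b ≤ corrERJoint n q s π' a b ↔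
      agreeCount n π a b ≤ agreeCount n π' a b := by
  rw [corrERJoint_eq_mul_pow hP.ne' hQ.ne' hb, corrERJoint_eq_mul_pow hP.ne' hQ.ne' hb,
    mul_le_mul_iff_right₀ (by positivity)]
  exact pow_le_pow_iff_right₀ (one_lt_corrERRatio hq hqs hP)

theorem qapScore_eq_two_mul_agreeCount (ha : ∀ u v, a u v = a v u)
    (ha_diag : ∀ u, a u u = false) (hb : ∀ u v, b u v = b v u) (π : Equiv.Perm (Fin n)) :
    qapScore n π a b = 2 * agreeCount n π a b := by
  have hind : ∀ u v,
      (if a u v = true then (1 : ℝ) else 0) * (if b (π u) (π v) = true then 1 else 0) =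
        (a u v && b (π u) (π v)).toNat := by
    intro u v
    cases a u v <;> cases b (π u) (π v) <;> simp
  simp only [qapScore, hind, agreeCount, Nat.cast_sum]
  rw [← Fintype.sum_prod_type']
  simpa only [nsmul_eq_mul, Nat.cast_ofNat] using
    sum_prod_eq_two_nsmul_sum_lt (fun u v => ((a u v && b (π u) (π v)).toNat : ℝ))
      (fun u v => by rw [ha, hb]) (fun u => by simp [ha_diag])

end CorrelatedER

theorem stmt_14_general (n : ℕ) (q s : ℝ) (hq0 : 0 < q)
    (hqs : q < s)
    (hq1s : 0 < q * (1 - s)) (h00 : 0 < 1 - q * (2 - s))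
    (a b : Fin n → Fin n → Bool)
    (ha_symm : ∀ u v, a u v = a v u) (ha_diag : ∀ u, a u u = false)
    (hb_symm : ∀ u v, b u v = b v u)
    (hpos : 0 < ∑ π' : Equiv.Perm (Fin n), corrERJoint n q s π' a b) :
    ∀ π : Equiv.Perm (Fin n),
      (∀ π' : Equiv.Perm (Fin n),
          corrERPosterior n q s π' a b ≤ corrERPosterior n q s π a b)
      ↔ (∀ π' : Equiv.Perm (Fin n), qapScore n π' a b ≤ qapScore n π a b) := by
  refine fun π => forall_congr' fun π' => ?_
  rw [corrERPosterior, corrERPosterior, div_le_div_iff_of_pos_right hpos,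
    corrERJoint_le_iff hq0 hqs hq1s h00 hb_symm,
    qapScore_eq_two_mul_agreeCount ha_symm ha_diag hb_symm,
    qapScore_eq_two_mul_agreeCount ha_symm ha_diag hb_symm]
  norm_cast
  omega

/-- Under the correlated Erdős–Rényi planted alignment model with `s > q`, for any
observed `(a,b)` of positive probability, a permutation maximizes the posterior
`P(π* = · | A = a, B = b)` iff it maximizes the QAP objective `⟨a, Π b Πᵀ⟩`:
the MAP estimator of `π*` is exactly the solution of the quadratic assignment
problem. -/
theorem stmt_14 (n : ℕ) (q s : ℝ) (hq0 : 0 < q) (hq1 : q < 1)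
    (hqs : q < s) (hs1 : s ≤ 1)
    (hq1s : 0 < q * (1 - s)) (h00 : 0 < 1 - q * (2 - s))
    (a b : Fin n → Fin n → Bool)
    (ha_symm : ∀ u v, a u v = a v u) (ha_diag : ∀ u, a u u = false)
    (hb_symm : ∀ u v, b u v = b v u) (hb_diag : ∀ u, b u u = false)
    (hpos : 0 < ∑ π' : Equiv.Perm (Fin n), corrERJoint n q s π' a b) :
    ∀ π : Equiv.Perm (Fin n),
      (∀ π' : Equiv.Perm (Fin n),
          corrERPosterior n q s π' a b ≤ corrERPosterior n q s π a b)
      ↔ (∀ π' : Equiv.Perm (Fin n), qapScore n π' a b ≤ qapScore n π a b) :=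
  stmt_14_general n q s hq0 hqs hq1s h00 a b ha_symm ha_diag hb_symm hpos
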